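/- arXiv:2306.13228 — 2 statements merged into one kernel-verified Lean document; each statement's English description precedes it below -/
import Mathlib

section
/- Fix Δ ∈ [0,∞). Assume |p(t)| ≤ 1 for almost every t and τ_m ≤ Δ. If x is a solution of x''(t) + p(t)·x(t − τ(t)) = 0 on [0, θ_Δ] with x(θ_Δ) = 0, then (max_{t∈[−τ_m,0]} |x(t)|) · r_Δ(t) ≥ |x(t)| for all t ∈ [0, θ_Δ]. -/
open MeasureTheory Set Filter

/-- `x` solves the delay equation `x''(t) + p(t)·x(t − τ(t)) = 0` on `I` in the
Carathéodory sense: `x` is differentiable on `I` and on `I` its derivative is an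
indefinite integral of `-p(u)·x(u − τ(u))` (so `x` and its derivative are locally
absolutely continuous there, and the equation holds for a.e. `t ∈ I`). -/
def SolvesDDE (p τ x : ℝ → ℝ) (I : Set ℝ) : Prop :=
  (∀ t ∈ I, HasDerivAt x (deriv x t) t) ∧
  (∀ t₀ ∈ I, ∀ t ∈ I, deriv x t = deriv x t₀ - ∫ u in t₀..t, p u * x (u - τ u))

/-- `r` is the solution `r_Δ` of `r''(t) + r(t − Δ) = 0`, `t ≥ 0`, with `r ≡ 1` on
`(-∞,0]` and `r'(0) = 0` (the derivative is an indefinite integral of `-r(· - Δ)`). -/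
def IsDelayCosine (Δ : ℝ) (r : ℝ → ℝ) : Prop :=
  (∀ t ≤ (0:ℝ), r t = 1) ∧
  (∀ t, 0 ≤ t → HasDerivAt r (deriv r t) t) ∧
  (∀ t, 0 ≤ t → deriv r t = - ∫ u in (0:ℝ)..t, r (u - Δ))

/-- `θ` is the first zero of `r` on `[0,∞)`. -/
def IsFirstZero (r : ℝ → ℝ) (θ : ℝ) : Prop :=
  0 < θ ∧ r θ = 0 ∧ ∀ t, 0 ≤ t → t < θ → 0 < r t

/-- `g(w) = ρ·r(θ − w − Δ)·χ_{[−Δ,0]}(w)`. -/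
noncomputable def gAux (ρ Δ θ : ℝ) (r : ℝ → ℝ) : ℝ → ℝ :=
  (Set.Icc (-Δ) (0:ℝ)).indicator fun w => ρ * r (θ - w - Δ)

/-- The double integral `∫_{-c}^0 (∫_{-c}^s max (β w) (g w) dw) ds`. -/
noncomputable def doubleInt (g β : ℝ → ℝ) (c : ℝ) : ℝ :=
  ∫ s in (-c)..(0:ℝ), ∫ w in (-c)..s, max (β w) (g w)

/-- The recursively defined sequences `β_n`, `ϖ_n` associated with `g`. -/
def IsBetaSeq (g : ℝ → ℝ) (β : ℕ → ℝ → ℝ) (ϖ : ℕ → ℝ) : Prop :=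
  (∀ t ≤ (0:ℝ), β 0 t = 1) ∧
  ∀ n : ℕ,
    (0 < ϖ n ∧ doubleInt g (β n) (ϖ n) = 1) ∧
    (∀ t, t ≤ -ϖ n → β (n+1) t = 1) ∧
    (∀ t, -ϖ n ≤ t → t ≤ 0 →
      β (n+1) t = 1 - ∫ s in (-ϖ n)..t, ∫ w in (-ϖ n)..s, max (β n w) (g w))

/-- `x` has a locally absolutely continuous derivative on `[a,b]`, with a.e. second
derivative `w`. -/
def HasSecondDerivAEOn (x w : ℝ → ℝ) (a b : ℝ) : Prop :=
  (∀ t ∈ Set.Icc a b, HasDerivAt x (deriv x t) t) ∧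
  (∀ t ∈ Set.Icc a b, deriv x t = deriv x a + ∫ u in a..t, w u)

/-! Let `Λ` be the maximum over `[0, θ]` of `|x / r|`, continued at the common zero `θ` by
`x'(θ) / r'(θ)`, so that `|x| ≤ Λ r` on `[0, θ]`. If `Λ` exceeded `M = max_{[-τ_m, 0]} |x|`,
the bound `|x| ≤ Λ r` would hold on all of `[-τ_m, θ]` (as `r ≡ 1` on `(-∞, 0]`), and at a
point `t₁ > 0` where the maximum is attained `y = Λ r - e x` (with `e = ±1`) would vanish together
with `y'`. Because `|p| ≤ 1`, `τ ≤ Δ` and `r` decreases, `y'' = e p x(t - τ) - Λ r(t - Δ) ≤ 0`,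
so `y' ≥ y'(t₁) = 0` on `[0, t₁]` and `Λ - e x(0) = y(0) ≤ y(t₁) = 0`, i.e. `Λ ≤ |x(0)| ≤ M`. -/

open scoped Topology Interval

theorem DifferentiableAt.continuousAt_dslope {𝕜 E : Type*} [NontriviallyNormedField 𝕜]
    [NormedAddCommGroup E] [NormedSpace 𝕜 E] {f : 𝕜 → E} {a b : 𝕜}
    (ha : DifferentiableAt 𝕜 f a) (hb : ContinuousAt f b) : ContinuousAt (dslope f a) b := by
  rcases eq_or_ne b a with rfl | hne
  · exact continuousAt_dslope_same.2 ha
  · exact (continuousAt_dslope_of_ne hne).2 hb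

theorem dslope_div_dslope_of_ne {f g : ℝ → ℝ} {a b : ℝ} (hf : f a = 0) (hg : g a = 0)
    (hb : b ≠ a) : (dslope f a / dslope g a) b = f b / g b := by
  simp only [Pi.div_apply, dslope_of_ne _ hb, slope_def_field, hf, hg, sub_zero]
  exact div_div_div_cancel_right₀ (sub_ne_zero.2 hb) _ _

theorem exists_abs_eq_one_mul_eq_of_abs_le {f g : ℝ → ℝ} {f' g' t : ℝ} (hf : HasDerivAt f f' t)
    (hg : HasDerivAt g g' t) (hle : ∀ᶠ s in 𝓝 t, |f s| ≤ g s) (heq : |f t| = g t) :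
    ∃ e : ℝ, |e| = 1 ∧ g t = e * f t ∧ g' = e * f' := by
  obtain ⟨e, he, hef⟩ : ∃ e : ℝ, |e| = 1 ∧ e * f t = |f t| := by
    rcases le_or_gt 0 (f t) with h | h
    · exact ⟨1, abs_one, by rw [one_mul, abs_of_nonneg h]⟩
    · exact ⟨-1, by norm_num, by rw [abs_of_neg h]; ring⟩
  have hmin : IsLocalMin (fun s => g s - e * f s) t := by
    filter_upwards [hle] with s hs
    have : e * f s ≤ |f s| := (le_abs_self _).trans_eq (by rw [abs_mul, he, one_mul])
    linarith
  refine ⟨e, he, by linarith, ?_⟩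
  linarith [hmin.hasDerivAt_eq_zero (hg.sub (hf.const_mul e))]

theorem exists_abs_eq_one_abs_div_mul_eq (a : ℝ) {b : ℝ} (hb : b ≠ 0) :
    ∃ e : ℝ, |e| = 1 ∧ |a / b| * b = e * a := by
  rw [abs_div]
  rcases le_or_gt 0 a with ha | ha <;> rcases hb.lt_or_gt with hb' | hb'
  · exact ⟨-1, by norm_num, by rw [abs_of_nonneg ha, abs_of_neg hb']; field_simp⟩
  · exact ⟨1, abs_one, by rw [abs_of_nonneg ha, abs_of_pos hb']; field_simp⟩
  · exact ⟨1, abs_one, by rw [abs_of_neg ha, abs_of_neg hb']; field_simp⟩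
  · exact ⟨-1, by norm_num, by rw [abs_of_neg ha, abs_of_pos hb']; field_simp⟩

theorem ae_le_essSup_of_ae_abs_le {α : Type*} [MeasurableSpace α] {μ : Measure α} {f : α → ℝ}
    (hf : ∃ M, ∀ᵐ t ∂μ, |f t| ≤ M) : ∀ᵐ t ∂μ, f t ≤ essSup f μ :=
  let ⟨_, hM⟩ := hf
  ae_le_essSup (isBoundedUnder_of_eventually_le (hM.mono fun _ h => (abs_le.1 h).2))

theorem antitoneOn_of_eq_sub_integral {g F : ℝ → ℝ} {a b : ℝ}
    (hg : ∀ s ∈ Icc a b, ∀ t ∈ Icc a b, g t = g s - ∫ u in s..t, F u)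
    (hF : ∀ᵐ u, u ∈ Icc a b → 0 ≤ F u) : AntitoneOn g (Icc a b) := by
  intro s hs t ht hst
  have hF' : 0 ≤ᵐ[volume.restrict (Icc s t)] F :=
    (ae_restrict_iff' measurableSet_Icc).2
      (hF.mono fun u h hu => h (Icc_subset_Icc hs.1 ht.2 hu))
  rw [hg s hs t ht]
  linarith [intervalIntegral.integral_nonneg_of_ae_restrict hst hF']

theorem intervalIntegrable_mul_comp_sub {p τ x : ℝ → ℝ} {a b c d K : ℝ} (hab : a ≤ b)
    (hpm : Measurable p) (hτm : Measurable τ) (hp : ∀ᵐ t, |p t| ≤ K)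
    (hx : ContinuousOn x (Icc a b)) (hτ : ∀ᵐ u, u ∈ [[c, d]] → u - τ u ∈ Icc a b) :
    IntervalIntegrable (fun u => p u * x (u - τ u)) volume c d := by
  set x' : ℝ → ℝ := fun s => x (projIcc a b hab s)
  have hx' : Continuous x' :=
    hx.comp_continuous (continuous_subtype_val.comp continuous_projIcc) fun s =>
      (projIcc a b hab s).2
  obtain ⟨C, hC⟩ := isCompact_Icc.exists_bound_of_continuousOn hx
  have hx'C : ∀ s, |x' s| ≤ C := fun s => hC _ (projIcc a b hab s).2
  have hint : IntegrableOn (fun u => p u * x' (u - τ u)) (Ι c d) := by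
    refine Measure.integrableOn_of_bounded (M := K * C) measure_Ioc_lt_top.ne
      (hpm.mul (hx'.measurable.comp (measurable_id.sub hτm))).aestronglyMeasurable ?_
    filter_upwards [ae_restrict_of_ae hp] with u hu
    rw [Real.norm_eq_abs, abs_mul]
    exact mul_le_mul hu (hx'C _) (abs_nonneg _) ((abs_nonneg _).trans hu)
  refine intervalIntegrable_iff.2 (Integrable.congr hint ?_)
  filter_upwards [ae_restrict_of_ae hτ, ae_restrict_mem measurableSet_uIoc] with u hu hmem
  simp only [x', projIcc_of_mem hab (hu (uIoc_subset_uIcc hmem))]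

namespace IsDelayCosine

variable {Δ θ : ℝ} {r : ℝ → ℝ}

theorem eventuallyEq_one (hr : IsDelayCosine Δ r) {t : ℝ} (ht : t < 0) :
    r =ᶠ[𝓝 t] fun _ => 1 :=
  eventually_of_mem (Iio_mem_nhds ht) fun s hs => hr.1 s (le_of_lt hs)

theorem hasDerivAt (hr : IsDelayCosine Δ r) (t : ℝ) : HasDerivAt r (deriv r t) t := by
  rcases lt_or_ge t 0 with ht | ht
  · exact ((hasDerivAt_const t (1 : ℝ)).congr_of_eventuallyEq
      (hr.eventuallyEq_one ht)).differentiableAt.hasDerivAt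
  · exact hr.2.1 t ht

theorem continuous (hr : IsDelayCosine Δ r) : Continuous r :=
  continuous_iff_continuousAt.2 fun t => (hr.hasDerivAt t).continuousAt

theorem deriv_eq_sub_integral (hr : IsDelayCosine Δ r) {s t : ℝ} (hs : 0 ≤ s) (ht : 0 ≤ t) :
    deriv r t = deriv r s - ∫ u in s..t, r (u - Δ) := by
  have hint : ∀ a b : ℝ, IntervalIntegrable (fun u => r (u - Δ)) volume a b := fun a b =>
    (hr.continuous.comp (continuous_sub_right Δ)).intervalIntegrable a b
  rw [hr.2.2 t ht, hr.2.2 s hs,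
    ← intervalIntegral.integral_add_adjacent_intervals (hint 0 s) (hint s t)]
  ring

theorem pos_of_lt (hr : IsDelayCosine Δ r) (hθ : IsFirstZero r θ) {t : ℝ} (ht : t < θ) :
    0 < r t := by
  rcases le_or_gt t 0 with h | h
  · rw [hr.1 t h]; exact one_pos
  · exact hθ.2.2 t h.le ht

theorem nonneg_of_le (hr : IsDelayCosine Δ r) (hθ : IsFirstZero r θ) {t : ℝ} (ht : t ≤ θ) :
    0 ≤ r t := by
  rcases ht.lt_or_eq with h | rfl
  · exact (hr.pos_of_lt hθ h).le
  · exact hθ.2.1.ge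

theorem deriv_nonpos (hΔ : 0 ≤ Δ) (hr : IsDelayCosine Δ r) (hθ : IsFirstZero r θ) {t : ℝ}
    (ht : t ≤ θ) : deriv r t ≤ 0 := by
  rcases lt_or_ge t 0 with h | h
  · rw [(hr.eventuallyEq_one h).deriv_eq, deriv_const]
  · rw [hr.2.2 t h, neg_nonpos]
    exact intervalIntegral.integral_nonneg h fun u hu => hr.nonneg_of_le hθ (by linarith [hu.2])

theorem antitoneOn_Iic (hΔ : 0 ≤ Δ) (hr : IsDelayCosine Δ r) (hθ : IsFirstZero r θ) :
    AntitoneOn r (Iic θ) := by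
  refine antitoneOn_of_deriv_nonpos (convex_Iic θ) hr.continuous.continuousOn
    (fun t _ => (hr.hasDerivAt t).differentiableAt.differentiableWithinAt) fun t ht => ?_
  rw [interior_Iic] at ht
  exact hr.deriv_nonpos hΔ hθ ht.le

theorem deriv_neg_of_isFirstZero (hΔ : 0 ≤ Δ) (hr : IsDelayCosine Δ r)
    (hθ : IsFirstZero r θ) : deriv r θ < 0 := by
  rw [hr.2.2 θ hθ.1.le, neg_lt_zero]
  refine intervalIntegral.intervalIntegral_pos_of_pos_on
    ((hr.continuous.comp (continuous_sub_right Δ)).intervalIntegrable 0 θ)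
    (fun u hu => hr.pos_of_lt hθ (by linarith [hu.2])) hθ.1

theorem dslope_neg (hΔ : 0 ≤ Δ) (hr : IsDelayCosine Δ r) (hθ : IsFirstZero r θ) {t : ℝ}
    (ht : t ≤ θ) : dslope r θ t < 0 := by
  rcases ht.lt_or_eq with h | rfl
  · rw [dslope_of_ne _ h.ne, slope_def_field, hθ.2.1, sub_zero]
    exact div_neg_of_pos_of_neg (hr.pos_of_lt hθ h) (sub_neg.2 h)
  · rw [dslope_same]
    exact hr.deriv_neg_of_isFirstZero hΔ hθ

end IsDelayCosine

theorem SolvesDDE.continuousOn {p τ x : ℝ → ℝ} {I : Set ℝ} (hx : SolvesDDE p τ x I) :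
    ContinuousOn x I :=
  fun t ht => (hx.1 t ht).continuousAt.continuousWithinAt

section Ratio

variable {x r : ℝ → ℝ} {a θ : ℝ}

-- When `x θ = r θ = 0`, `dslope x θ / dslope r θ` is `x / r` off `θ` and `x'(θ) / r'(θ)` at `θ`.

theorem continuousOn_dslope_div (hxd : ∀ t ∈ Icc a θ, HasDerivAt x (deriv x t) t)
    (hrd : ∀ t ∈ Icc a θ, HasDerivAt r (deriv r t) t) (haθ : a ≤ θ)
    (hr0 : ∀ t ∈ Icc a θ, dslope r θ t ≠ 0) : ContinuousOn (dslope x θ / dslope r θ) (Icc a θ) :=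
  have hθ : θ ∈ Icc a θ := right_mem_Icc.2 haθ
  ContinuousOn.div
    (fun t ht => ((hxd θ hθ).differentiableAt.continuousAt_dslope
      (hxd t ht).continuousAt).continuousWithinAt)
    (fun t ht => ((hrd θ hθ).differentiableAt.continuousAt_dslope
      (hrd t ht).continuousAt).continuousWithinAt) hr0

theorem abs_le_mul_of_abs_dslope_div_le {Λ : ℝ} (hxθ : x θ = 0) (hrθ : r θ = 0)
    (hrpos : ∀ t ∈ Ico a θ, 0 < r t) (hΛ : ∀ t ∈ Icc a θ, |(dslope x θ / dslope r θ) t| ≤ Λ) :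
    ∀ t ∈ Icc a θ, |x t| ≤ Λ * r t := by
  intro t ht
  rcases ht.2.lt_or_eq with h | rfl
  · have hrt := hrpos t ⟨ht.1, h⟩
    have := hΛ t ht
    rwa [dslope_div_dslope_of_ne hxθ hrθ h.ne, abs_div, abs_of_pos hrt, div_le_iff₀ hrt] at this
  · rw [hxθ, hrθ, abs_zero, mul_zero]

theorem exists_abs_eq_one_of_isMaxOn_abs_dslope_div {t₁ : ℝ}
    (hxd : ∀ t ∈ Icc a θ, HasDerivAt x (deriv x t) t)
    (hrd : ∀ t ∈ Icc a θ, HasDerivAt r (deriv r t) t) (hxθ : x θ = 0) (hrθ : r θ = 0)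
    (hrθ' : deriv r θ ≠ 0) (hrpos : ∀ t ∈ Ico a θ, 0 < r t) (ht₁ : t₁ ∈ Ioc a θ)
    (hmax : IsMaxOn (fun t => |(dslope x θ / dslope r θ) t|) (Icc a θ) t₁) :
    ∃ e : ℝ, |e| = 1 ∧ |(dslope x θ / dslope r θ) t₁| * r t₁ = e * x t₁ ∧
      |(dslope x θ / dslope r θ) t₁| * deriv r t₁ = e * deriv x t₁ := by
  set Λ := |(dslope x θ / dslope r θ) t₁|
  rcases ht₁.2.lt_or_eq with h | rfl
  · have hr₁ := hrpos t₁ ⟨ht₁.1.le, h⟩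
    have hbound := abs_le_mul_of_abs_dslope_div_le hxθ hrθ hrpos fun t ht => hmax ht
    refine exists_abs_eq_one_mul_eq_of_abs_le (hxd t₁ ⟨ht₁.1.le, h.le⟩)
      ((hrd t₁ ⟨ht₁.1.le, h.le⟩).const_mul Λ) ?_ ?_
    · filter_upwards [Ioo_mem_nhds ht₁.1 h] with s hs using hbound s ⟨hs.1.le, hs.2.le⟩
    · simp only [Λ]
      rw [dslope_div_dslope_of_ne hxθ hrθ h.ne, abs_div, abs_of_pos hr₁,
        div_mul_cancel₀ _ hr₁.ne']
  · obtain ⟨e, he, hΛe⟩ := exists_abs_eq_one_abs_div_mul_eq (deriv x t₁) hrθ'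
    refine ⟨e, he, by rw [hxθ, hrθ, mul_zero, mul_zero], ?_⟩
    simpa only [Λ, Pi.div_apply, dslope_same] using hΛe

end Ratio

section Comparison

variable {Δ θ c e Λ : ℝ} {p τ x r : ℝ → ℝ}

theorem ae_sub_mem_Icc (hτ0 : ∀ t, 0 ≤ τ t) (hτc : ∀ᵐ t, τ t ≤ c) :
    ∀ᵐ u, u ∈ Icc 0 θ → u - τ u ∈ Icc (-c) θ := by
  filter_upwards [hτc] with u hτu hu
  exact ⟨by linarith [hu.1], by linarith [hτ0 u, hu.2]⟩

theorem ae_mul_forcing_le (hanti : AntitoneOn r (Iic θ)) (hτ0 : ∀ t, 0 ≤ τ t)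
    (hp1 : ∀ᵐ t, |p t| ≤ 1) (hτc : ∀ᵐ t, τ t ≤ c) (hcΔ : c ≤ Δ) (he : |e| ≤ 1) (hΛ : 0 ≤ Λ)
    (hbound : ∀ s ∈ Icc (-c) θ, |x s| ≤ Λ * r s) :
    ∀ᵐ u, u ∈ Icc 0 θ → e * (p u * x (u - τ u)) ≤ Λ * r (u - Δ) := by
  filter_upwards [hp1, hτc, ae_sub_mem_Icc hτ0 hτc] with u hpu hτu hdelay hu
  replace hdelay := hdelay hu
  calc e * (p u * x (u - τ u)) ≤ |e| * |p u| * |x (u - τ u)| := by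
        rw [← abs_mul, ← abs_mul, ← mul_assoc]; exact le_abs_self _
    _ ≤ |x (u - τ u)| :=
        mul_le_of_le_one_left (abs_nonneg _) (mul_le_one₀ he (abs_nonneg _) hpu)
    _ ≤ Λ * r (u - τ u) := hbound _ hdelay
    _ ≤ Λ * r (u - Δ) :=
        mul_le_mul_of_nonneg_left (hanti (by simp only [mem_Iic]; linarith [hdelay.2])
          (mem_Iic.2 hdelay.2) (by linarith)) hΛ

theorem antitoneOn_deriv_sub_of_ae_mul_forcing_le (hr : IsDelayCosine Δ r)
    (hx : SolvesDDE p τ x (Icc 0 θ))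
    (hP : IntervalIntegrable (fun u => p u * x (u - τ u)) volume 0 θ)
    (hle : ∀ᵐ u, u ∈ Icc 0 θ → e * (p u * x (u - τ u)) ≤ Λ * r (u - Δ)) :
    AntitoneOn (fun s => Λ * deriv r s - e * deriv x s) (Icc 0 θ) := by
  refine antitoneOn_of_eq_sub_integral (F := fun u => Λ * r (u - Δ) - e * (p u * x (u - τ u)))
    (fun s hs t ht => ?_) (hle.mono fun u h hu => sub_nonneg.2 (h hu))
  have hPst : IntervalIntegrable (fun u => p u * x (u - τ u)) volume s t :=
    hP.mono_set (by rw [uIcc_of_le (hs.1.trans hs.2)]; exact uIcc_subset_Icc hs ht)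
  have hRst : IntervalIntegrable (fun u => r (u - Δ)) volume s t :=
    (hr.continuous.comp (continuous_sub_right Δ)).intervalIntegrable s t
  rw [intervalIntegral.integral_sub (hRst.const_mul Λ) (hPst.const_mul e),
    intervalIntegral.integral_const_mul, intervalIntegral.integral_const_mul,
    hr.deriv_eq_sub_integral hs.1 ht.1, hx.2 s hs t ht]
  ring

theorem le_abs_of_deriv_sub_antitoneOn (hr : IsDelayCosine Δ r) (hx : SolvesDDE p τ x (Icc 0 θ))
    {t₁ : ℝ} (ht₁ : t₁ ∈ Icc 0 θ) (he : |e| ≤ 1)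
    (hD : AntitoneOn (fun s => Λ * deriv r s - e * deriv x s) (Icc 0 θ))
    (hy₁ : Λ * r t₁ = e * x t₁) (hD₁ : Λ * deriv r t₁ = e * deriv x t₁) : Λ ≤ |x 0| := by
  have hsub : Icc 0 t₁ ⊆ Icc 0 θ := Icc_subset_Icc le_rfl ht₁.2
  have hderiv : ∀ s ∈ Icc 0 t₁, HasDerivAt (fun s => Λ * r s - e * x s)
      (Λ * deriv r s - e * deriv x s) s := fun s hs =>
    ((hr.hasDerivAt s).const_mul Λ).sub ((hx.1 s (hsub hs)).const_mul e)
  have hmono : MonotoneOn (fun s => Λ * r s - e * x s) (Icc 0 t₁) := by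
    refine monotoneOn_of_hasDerivWithinAt_nonneg (convex_Icc 0 t₁)
      (fun s hs => (hderiv s hs).continuousAt.continuousWithinAt)
      (fun s hs => (hderiv s (interior_subset hs)).hasDerivWithinAt) fun s hs => ?_
    have hs' := interior_subset hs
    linarith [hD (hsub hs') ⟨ht₁.1, ht₁.2⟩ hs'.2]
  have hy0 := hmono (left_mem_Icc.2 ht₁.1) (right_mem_Icc.2 ht₁.1) ht₁.1
  simp only [hr.1 0 le_rfl, mul_one] at hy0
  have hex : e * x 0 ≤ |x 0| :=
    (le_abs_self _).trans (by rw [abs_mul]; exact mul_le_of_le_one_left (abs_nonneg _) he)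
  linarith

theorem le_abs_of_touching_majorant (hΔ : 0 ≤ Δ) (hr : IsDelayCosine Δ r)
    (hθ : IsFirstZero r θ) (hpm : Measurable p) (hτm : Measurable τ) (hτ0 : ∀ t, 0 ≤ τ t)
    (hp1 : ∀ᵐ t, |p t| ≤ 1) (hτc : ∀ᵐ t, τ t ≤ c) (hcΔ : c ≤ Δ) (hc0 : 0 ≤ c)
    (hx : SolvesDDE p τ x (Icc 0 θ)) (hxc : ContinuousOn x (Icc (-c) θ)) (hΛ : 0 ≤ Λ)
    (hbound : ∀ s ∈ Icc (-c) θ, |x s| ≤ Λ * r s) {t₁ : ℝ} (ht₁ : t₁ ∈ Icc 0 θ) (he : |e| ≤ 1)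
    (hy₁ : Λ * r t₁ = e * x t₁) (hD₁ : Λ * deriv r t₁ = e * deriv x t₁) : Λ ≤ |x 0| := by
  have hP : IntervalIntegrable (fun u => p u * x (u - τ u)) volume 0 θ :=
    intervalIntegrable_mul_comp_sub ((neg_nonpos.2 hc0).trans hθ.1.le) hpm hτm hp1 hxc
      (by simpa only [uIcc_of_le hθ.1.le] using ae_sub_mem_Icc hτ0 hτc)
  have hD := antitoneOn_deriv_sub_of_ae_mul_forcing_le hr hx hP
    (ae_mul_forcing_le (hr.antitoneOn_Iic hΔ hθ) hτ0 hp1 hτc hcΔ he hΛ hbound)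
  exact le_abs_of_deriv_sub_antitoneOn hr hx ht₁ he hD hy₁ hD₁

theorem abs_dslope_div_le_of_isMaxOn (hΔ : 0 ≤ Δ) (hr : IsDelayCosine Δ r)
    (hθ : IsFirstZero r θ) (hpm : Measurable p) (hτm : Measurable τ) (hτ0 : ∀ t, 0 ≤ τ t)
    (hp1 : ∀ᵐ t, |p t| ≤ 1) (hτc : ∀ᵐ t, τ t ≤ c) (hcΔ : c ≤ Δ) (hc0 : 0 ≤ c)
    (hx : SolvesDDE p τ x (Icc 0 θ)) (hxc : ContinuousOn x (Icc (-c) θ)) (hxθ : x θ = 0)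
    {M : ℝ} (hM : ∀ s ∈ Icc (-c) 0, |x s| ≤ M) {t₁ : ℝ} (ht₁ : t₁ ∈ Icc 0 θ)
    (hmax : IsMaxOn (fun t => |(dslope x θ / dslope r θ) t|) (Icc 0 θ) t₁) :
    |(dslope x θ / dslope r θ) t₁| ≤ M := by
  set Λ := |(dslope x θ / dslope r θ) t₁|
  have hx0M := hM 0 ⟨neg_nonpos.2 hc0, le_rfl⟩
  have hrpos : ∀ t ∈ Ico 0 θ, 0 < r t := fun t ht => hr.pos_of_lt hθ ht.2
  by_contra! hMΛ
  have ht₁0 : t₁ ≠ 0 := by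
    rintro rfl
    simp only [Λ, dslope_div_dslope_of_ne hxθ hθ.2.1 hθ.1.ne, hr.1 0 le_rfl, div_one] at hMΛ
    exact hx0M.not_gt hMΛ
  obtain ⟨e, he, hy₁, hD₁⟩ := exists_abs_eq_one_of_isMaxOn_abs_dslope_div hx.1
    (fun t _ => hr.hasDerivAt t) hxθ hθ.2.1 (hr.deriv_neg_of_isFirstZero hΔ hθ).ne hrpos
    ⟨ht₁.1.lt_of_ne' ht₁0, ht₁.2⟩ hmax
  have hbound : ∀ s ∈ Icc (-c) θ, |x s| ≤ Λ * r s := fun s hs => by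
    rcases le_total s 0 with h | h
    · rw [hr.1 s h, mul_one]; exact (hM s ⟨hs.1, h⟩).trans hMΛ.le
    · exact abs_le_mul_of_abs_dslope_div_le hxθ hθ.2.1 hrpos (fun t ht => hmax ht) s ⟨h, hs.2⟩
  exact (le_abs_of_touching_majorant hΔ hr hθ hpm hτm hτ0 hp1 hτc hcΔ hc0 hx hxc (abs_nonneg _)
    hbound ht₁ he.le hy₁ hD₁).not_gt (hx0M.trans_lt hMΛ)

end Comparison

/-- descent upper bound (Corollary of the backward comparison). -/
theorem descent_upper_bound
    (Δ : ℝ) (hΔ : 0 ≤ Δ) (p τ x r : ℝ → ℝ) (θ : ℝ)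
    (hpm : Measurable p) (hτm : Measurable τ) (hτ0 : ∀ t, 0 ≤ τ t)
    (hτb : ∃ M, ∀ᵐ t ∂(volume : Measure ℝ), |τ t| ≤ M)
    (hp1 : ∀ᵐ t ∂(volume : Measure ℝ), |p t| ≤ 1)
    (hτΔ : essSup τ volume ≤ Δ)
    (hr : IsDelayCosine Δ r) (hθ : IsFirstZero r θ)
    (hx : SolvesDDE p τ x (Set.Icc 0 θ))
    (hxcont : ContinuousOn x (Set.Icc (-(essSup τ volume)) (0:ℝ)))
    (hxθ : x θ = 0) :
    ∀ t ∈ Set.Icc (0:ℝ) θ,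
      |x t| ≤ (sSup ((fun u => |x u|) '' Set.Icc (-(essSup τ volume)) (0:ℝ))) * r t := by
  set c := essSup τ volume
  have hτc : ∀ᵐ t, τ t ≤ c := ae_le_essSup_of_ae_abs_le hτb
  have hc0 : 0 ≤ c := let ⟨t, ht⟩ := hτc.exists; (hτ0 t).trans ht
  have hM : ∀ s ∈ Icc (-c) 0, |x s| ≤ sSup ((fun u => |x u|) '' Icc (-c) 0) := fun s hs =>
    le_csSup (isCompact_Icc.image_of_continuousOn hxcont.abs).bddAbove (mem_image_of_mem _ hs)
  have hxc : ContinuousOn x (Icc (-c) θ) := by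
    rw [← Icc_union_Icc_eq_Icc (neg_nonpos.2 hc0) hθ.1.le]
    exact hxcont.union_of_isClosed hx.continuousOn isClosed_Icc isClosed_Icc
  obtain ⟨t₁, ht₁, hmax⟩ := isCompact_Icc.exists_isMaxOn (nonempty_Icc.2 hθ.1.le)
    (continuousOn_dslope_div hx.1 (fun t _ => hr.hasDerivAt t) hθ.1.le
      fun t ht => (hr.dslope_neg hΔ hθ ht.2).ne).abs
  have hΛM := abs_dslope_div_le_of_isMaxOn hΔ hr hθ hpm hτm hτ0 hp1 hτc hτΔ hc0 hx hxc hxθ hM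
    ht₁ hmax
  intro t ht
  calc |x t| ≤ |(dslope x θ / dslope r θ) t₁| * r t :=
        abs_le_mul_of_abs_dslope_div_le hxθ hθ.2.1 (fun t ht => hr.pos_of_lt hθ ht.2)
          (fun t ht => hmax ht) t ht
    _ ≤ _ := mul_le_mul_of_nonneg_right hΛM (hr.nonneg_of_le hθ ht.2)
end

section
/- For every fixed Δ ≥ 0 and ρ > 0, and for every n = 0, 1, 2, ..., one has β_n(t) ≥ cos(t + π/2) for all t ∈ [−π/2, 0]; consequently ϖ_n ≤ π/2 for every n, and the limit Ψ(ρ,Δ) := lim_{n→∞} ϖ_n satisfies Ψ(ρ,Δ) ≤ π/2. -/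
open MeasureTheory Set Filter

/-! Write `D_M(c, t) = ∫_{-c}^t ∫_{-c}^s M`, so that `β_{n+1} = 1 - D_{M_n}(ϖ_n, ·)` on
`[-ϖ_n, 0]` with `M_n = max β_n g ≥ β_n`. The function `cosProfile`, equal to `1` up to `-π/2`
and to `-sin t = cos (t + π/2)` on `[-π/2, 0]`, is a lower barrier for every `β_n`. If
`M ≥ cosProfile`, then `D_M(π/2, 0) ≥ D_{-sin}(π/2, 0) = 1` and `c ↦ D_M(c, 0)` is strictly
increasing (`M > 0` on `(-∞, 0)`), so `D_M(ϖ, 0) = 1` forces `ϖ ≤ π/2`; and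
`1 - D_M(ϖ, ·) + sin` has second derivative `-(M + sin) ≤ 0` and is nonnegative at both ends of
`[-ϖ, 0]`, hence everywhere on it. The same concavity argument gives `β_{n+1} ≤ β_n`
inductively, so `ϖ_n` is nondecreasing, and bounded by `π/2`. -/

open Real

theorem nonneg_on_Icc_of_hasDerivAt_of_antitoneOn {u u' : ℝ → ℝ} {a b : ℝ}
    (hu : ContinuousOn u (Icc a b)) (hd : ∀ x ∈ Ioo a b, HasDerivAt u (u' x) x)
    (hanti : AntitoneOn u' (Ioo a b)) (ha : 0 ≤ u a) (hb : 0 ≤ u b) :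
    ∀ t ∈ Icc a b, 0 ≤ u t := by
  intro t ht
  have hconc : ConcaveOn ℝ (Icc a b) u := by
    refine AntitoneOn.concaveOn_of_deriv (convex_Icc a b) hu ?_ ?_ <;> rw [interior_Icc]
    · exact fun x hx => (hd x hx).differentiableAt.differentiableWithinAt
    · exact hanti.congr fun x hx => (hd x hx).deriv.symm
  have hab := ht.1.trans ht.2
  exact (le_min ha hb).trans
    (hconc.min_le_of_mem_Icc (left_mem_Icc.2 hab) (right_mem_Icc.2 hab) ht)

theorem IntervalIntegrable.max {f g : ℝ → ℝ} {a b : ℝ}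
    (hf : IntervalIntegrable f volume a b) (hg : IntervalIntegrable g volume a b) :
    IntervalIntegrable (fun x => max (f x) (g x)) volume a b :=
  ⟨hf.1.sup hg.1, hf.2.sup hg.2⟩

theorem IntervalIntegrable.mono_Icc {f : ℝ → ℝ} {a b x y : ℝ}
    (hf : IntervalIntegrable f volume a b) (hab : a ≤ b) (hx : x ∈ Icc a b)
    (hy : y ∈ Icc a b) : IntervalIntegrable f volume x y :=
  hf.mono_set (by rw [uIcc_of_le hab]; exact uIcc_subset_Icc hx hy)

/-- `doubleInt g β c = doublePrimitive (fun w => max (β w) (g w)) c 0`. -/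
noncomputable def doublePrimitive (M : ℝ → ℝ) (c t : ℝ) : ℝ :=
  ∫ s in (-c)..t, ∫ w in (-c)..s, M w

section DoublePrimitive

variable {M N : ℝ → ℝ} {c : ℝ}

theorem continuousOn_primitive_Icc (hM : IntervalIntegrable M volume (-c) 0) (hc : 0 ≤ c) :
    ContinuousOn (fun s => ∫ w in (-c)..s, M w) (Icc (-c) 0) := by
  simpa only [uIcc_of_le (neg_nonpos.2 hc)] using
    intervalIntegral.continuousOn_primitive_interval' hM left_mem_uIcc

theorem intervalIntegrable_primitive (hM : IntervalIntegrable M volume (-c) 0) {a b : ℝ}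
    (ha : a ∈ Icc (-c) 0) (hb : b ∈ Icc (-c) 0) :
    IntervalIntegrable (fun s => ∫ w in (-c)..s, M w) volume a b := by
  have hc : 0 ≤ c := by linarith [ha.1, ha.2]
  exact ((continuousOn_primitive_Icc hM hc).mono (uIcc_subset_Icc ha hb)).intervalIntegrable

theorem continuousOn_doublePrimitive (hM : IntervalIntegrable M volume (-c) 0) (hc : 0 ≤ c) :
    ContinuousOn (doublePrimitive M c) (Icc (-c) 0) := by
  have h := intervalIntegral.continuousOn_primitive_interval'
    (intervalIntegrable_primitive hM (left_mem_Icc.2 (neg_nonpos.2 hc))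
      (right_mem_Icc.2 (neg_nonpos.2 hc))) left_mem_uIcc
  rwa [uIcc_of_le (neg_nonpos.2 hc)] at h

theorem hasDerivAt_doublePrimitive (hM : IntervalIntegrable M volume (-c) 0) {x : ℝ}
    (hx : x ∈ Ioo (-c) 0) :
    HasDerivAt (doublePrimitive M c) (∫ w in (-c)..x, M w) x := by
  have hc : 0 ≤ c := by linarith [hx.1, hx.2]
  have hG := continuousOn_primitive_Icc hM hc
  refine intervalIntegral.integral_hasDerivAt_right
    (intervalIntegrable_primitive hM (left_mem_Icc.2 (neg_nonpos.2 hc)) (Ioo_subset_Icc_self hx))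
    ?_ (hG.continuousAt (Icc_mem_nhds hx.1 hx.2))
  exact (hG.mono Ioo_subset_Icc_self).stronglyMeasurableAtFilter isOpen_Ioo x hx

theorem doublePrimitive_nonneg {t : ℝ} (ht : -c ≤ t) (hM : ∀ w ∈ Icc (-c) t, 0 ≤ M w) :
    0 ≤ doublePrimitive M c t :=
  intervalIntegral.integral_nonneg ht fun _ hs =>
    intervalIntegral.integral_nonneg hs.1 fun w hw => hM w ⟨hw.1, hw.2.trans hs.2⟩

theorem doublePrimitive_mono (hN : IntervalIntegrable N volume (-c) 0)
    (hM : IntervalIntegrable M volume (-c) 0) (hc : 0 ≤ c)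
    (hNM : ∀ w ∈ Icc (-c) 0, N w ≤ M w) :
    doublePrimitive N c 0 ≤ doublePrimitive M c 0 := by
  have hc' : -c ≤ 0 := neg_nonpos.2 hc
  refine intervalIntegral.integral_mono_on hc'
    (intervalIntegrable_primitive hN (left_mem_Icc.2 hc') (right_mem_Icc.2 hc'))
    (intervalIntegrable_primitive hM (left_mem_Icc.2 hc') (right_mem_Icc.2 hc')) fun s hs => ?_
  exact intervalIntegral.integral_mono_on hs.1 (hN.mono_Icc hc' (left_mem_Icc.2 hc') hs)
    (hM.mono_Icc hc' (left_mem_Icc.2 hc') hs) fun w hw => hNM w ⟨hw.1, hw.2.trans hs.2⟩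

theorem doublePrimitive_lt_of_lt {c₁ c₂ : ℝ} (hM : IntervalIntegrable M volume (-c₂) 0)
    (hM0 : ∀ w ∈ Icc (-c₂) (-c₁), 0 ≤ M w) (hpos : ∀ w ∈ Ioo (-c₂) (-c₁), 0 < M w)
    (h₁ : 0 < c₁) (h₁₂ : c₁ < c₂) :
    doublePrimitive M c₁ 0 < doublePrimitive M c₂ 0 := by
  have h₂0 : -c₂ ≤ 0 := by linarith
  have hmid : -c₁ ∈ Icc (-c₂) 0 := ⟨by linarith, by linarith⟩
  have hM₁ := hM.mono_Icc h₂0 hmid (right_mem_Icc.2 h₂0)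
  set K := ∫ w in (-c₂)..(-c₁), M w
  have hK : 0 < K := intervalIntegral.intervalIntegral_pos_of_pos_on
    (hM.mono_Icc h₂0 (left_mem_Icc.2 h₂0) hmid) hpos (by linarith)
  have hshift :
      ∀ s ∈ uIcc (-c₁) 0, ∫ w in (-c₂)..s, M w = K + ∫ w in (-c₁)..s, M w := by
    intro s hs
    rw [uIcc_of_le hmid.2] at hs
    exact (intervalIntegral.integral_add_adjacent_intervals
      (hM.mono_Icc h₂0 (left_mem_Icc.2 h₂0) hmid)
      (hM.mono_Icc h₂0 hmid ⟨hmid.1.trans hs.1, hs.2⟩)).symm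
  have hleft : 0 ≤ ∫ s in (-c₂)..(-c₁), ∫ w in (-c₂)..s, M w :=
    intervalIntegral.integral_nonneg hmid.1 fun _ hs =>
      intervalIntegral.integral_nonneg hs.1 fun w hw => hM0 w ⟨hw.1, hw.2.trans hs.2⟩
  have hsplit := intervalIntegral.integral_add_adjacent_intervals
    (intervalIntegrable_primitive hM (left_mem_Icc.2 h₂0) hmid)
    (intervalIntegrable_primitive hM hmid (right_mem_Icc.2 h₂0))
  have hright :
      ∫ s in (-c₁)..0, ∫ w in (-c₂)..s, M w = c₁ * K + doublePrimitive M c₁ 0 := by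
    rw [intervalIntegral.integral_congr hshift,
      intervalIntegral.integral_add intervalIntegrable_const
      (intervalIntegrable_primitive hM₁ (left_mem_Icc.2 hmid.2) (right_mem_Icc.2 hmid.2)),
      intervalIntegral.integral_const, smul_eq_mul, sub_neg_eq_add, zero_add]
    rfl
  calc doublePrimitive M c₁ 0 < c₁ * K + doublePrimitive M c₁ 0 := by nlinarith
    _ = ∫ s in (-c₁)..0, ∫ w in (-c₂)..s, M w := hright.symm
    _ ≤ doublePrimitive M c₂ 0 := (le_add_of_nonneg_left hleft).trans_eq hsplit

theorem doublePrimitive_neg_sin_pi_div_two : doublePrimitive (fun w => -sin w) (π / 2) 0 = 1 := by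
  simp [doublePrimitive, intervalIntegral.integral_neg, integral_sin, integral_cos]

theorem le_pi_div_two_of_doublePrimitive_eq_one (hM : ∀ a ≤ 0, IntervalIntegrable M volume a 0)
    (hsin : ∀ w ∈ Icc (-(π / 2)) 0, -sin w ≤ M w) (hpos : ∀ w < 0, 0 < M w)
    (hD : doublePrimitive M c 0 = 1) : c ≤ π / 2 := by
  by_contra! hlt
  have hle : 1 ≤ doublePrimitive M (π / 2) 0 :=
    doublePrimitive_neg_sin_pi_div_two ▸ doublePrimitive_mono
      (continuous_sin.neg.intervalIntegrable _ _) (hM _ (by linarith [pi_pos])) (by positivity) hsin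
  have hlt' := doublePrimitive_lt_of_lt (hM _ (by linarith [pi_pos]))
    (fun w hw => (hpos w (by linarith [hw.2, pi_pos])).le)
    (fun w hw => hpos w (by linarith [hw.2, pi_pos])) (by positivity) hlt
  linarith

theorem neg_sin_le_one_sub_doublePrimitive (hM : IntervalIntegrable M volume (-c) 0)
    (hsin : ∀ w ∈ Icc (-c) 0, -sin w ≤ M w) (hD : doublePrimitive M c 0 ≤ 1) :
    ∀ t ∈ Icc (-c) 0, -sin t ≤ 1 - doublePrimitive M c t := by
  intro t ht
  have hc : -c ≤ 0 := ht.1.trans ht.2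
  suffices 0 ≤ 1 - doublePrimitive M c t + sin t by linarith
  refine nonneg_on_Icc_of_hasDerivAt_of_antitoneOn (u' := fun x => -(∫ w in (-c)..x, M w) + cos x)
    ?_ (fun x hx => ((hasDerivAt_doublePrimitive hM hx).const_sub 1).add (hasDerivAt_sin x))
    ?_ ?_ ?_ t ht
  · exact ((continuousOn_const.sub (continuousOn_doublePrimitive hM (by linarith))).add
      continuous_sin.continuousOn)
  · intro x hx y hy hxy
    have hsub := intervalIntegral.integral_interval_sub_left
      (hM.mono_Icc hc (left_mem_Icc.2 hc) (Ioo_subset_Icc_self hy))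
      (hM.mono_Icc hc (left_mem_Icc.2 hc) (Ioo_subset_Icc_self hx))
    have hcmp : ∫ w in x..y, -sin w ≤ ∫ w in x..y, M w :=
      intervalIntegral.integral_mono_on hxy (continuous_sin.neg.intervalIntegrable _ _)
        (hM.mono_Icc hc (Ioo_subset_Icc_self hx) (Ioo_subset_Icc_self hy))
        fun w hw => hsin w ⟨hx.1.le.trans hw.1, hw.2.trans hy.2.le⟩
    rw [intervalIntegral.integral_neg, integral_sin] at hcmp
    dsimp only
    linarith
  · simp [doublePrimitive, sin_le_one]
  · simpa using hD

theorem doublePrimitive_le_doublePrimitive {c₁ c₂ : ℝ}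
    (hM : IntervalIntegrable M volume (-c₁) 0) (hN : IntervalIntegrable N volume (-c₂) 0)
    (hNM : ∀ w ∈ Icc (-c₁) 0, N w ≤ M w)
    (hN0 : ∀ w ∈ Icc (-c₂) (-c₁), 0 ≤ N w) (h₁₂ : c₁ ≤ c₂)
    (hD : doublePrimitive M c₁ 0 ≤ doublePrimitive N c₂ 0) :
    ∀ t ∈ Icc (-c₁) 0, doublePrimitive M c₁ t ≤ doublePrimitive N c₂ t := by
  intro t ht
  have hc₁ : -c₁ ≤ 0 := ht.1.trans ht.2
  have hc₂ : -c₂ ≤ 0 := by linarith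
  have hsub : Icc (-c₁) 0 ⊆ Icc (-c₂) 0 := Icc_subset_Icc_left (by linarith)
  suffices 0 ≤ doublePrimitive N c₂ t - doublePrimitive M c₁ t by linarith
  refine nonneg_on_Icc_of_hasDerivAt_of_antitoneOn
    (u' := fun x => (∫ w in (-c₂)..x, N w) - ∫ w in (-c₁)..x, M w) ?_
    (fun x hx => (hasDerivAt_doublePrimitive hN ⟨by linarith [hx.1], hx.2⟩).sub
      (hasDerivAt_doublePrimitive hM hx)) ?_ ?_ ?_ t ht
  · exact ((continuousOn_doublePrimitive hN (by linarith)).mono hsub).sub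
      (continuousOn_doublePrimitive hM (by linarith))
  · intro x hx y hy hxy
    have hx' := Ioo_subset_Icc_self hx
    have hy' := Ioo_subset_Icc_self hy
    have hsubN := intervalIntegral.integral_interval_sub_left
      (hN.mono_Icc hc₂ (left_mem_Icc.2 hc₂) (hsub hy'))
      (hN.mono_Icc hc₂ (left_mem_Icc.2 hc₂) (hsub hx'))
    have hsubM := intervalIntegral.integral_interval_sub_left
      (hM.mono_Icc hc₁ (left_mem_Icc.2 hc₁) hy') (hM.mono_Icc hc₁ (left_mem_Icc.2 hc₁) hx')
    have hcmp : ∫ w in x..y, N w ≤ ∫ w in x..y, M w :=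
      intervalIntegral.integral_mono_on hxy (hN.mono_Icc hc₂ (hsub hx') (hsub hy'))
        (hM.mono_Icc hc₁ hx' hy') fun w hw => hNM w ⟨hx'.1.trans hw.1, hw.2.trans hy'.2⟩
    dsimp only
    linarith
  · simpa [doublePrimitive] using doublePrimitive_nonneg (by linarith) fun w hw => hN0 w hw
  · simpa using hD

end DoublePrimitive

/-- `cos (t + π / 2) = -sin t` on `[-π/2, 0]`, continued by its maximum `1` to the left. -/
noncomputable def cosProfile (t : ℝ) : ℝ := -sin (max t (-(π / 2)))

theorem cosProfile_le_one (t : ℝ) : cosProfile t ≤ 1 :=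
  neg_le.2 (neg_one_le_sin _)

theorem cosProfile_of_le {t : ℝ} (ht : -(π / 2) ≤ t) : cosProfile t = -sin t := by
  rw [cosProfile, max_eq_left ht]

theorem neg_sin_le_cosProfile (t : ℝ) : -sin t ≤ cosProfile t := by
  rcases le_total (-(π / 2)) t with h | h
  · rw [cosProfile_of_le h]
  · rw [cosProfile, max_eq_right h, sin_neg, sin_pi_div_two, neg_neg]
    exact neg_le.2 (neg_one_le_sin t)

theorem cosProfile_pos {t : ℝ} (ht : t < 0) : 0 < cosProfile t := by
  refine neg_pos.2 (sin_neg_of_neg_of_neg_pi_lt (max_lt ht (by linarith [pi_pos])) ?_)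
  exact (by linarith [pi_pos] : -π < -(π / 2)).trans_le (le_max_right _ _)

/-- How `β (n + 1)` is obtained from `M = max (β n) g` and `c = ϖ n`. -/
def IsUpdate (M : ℝ → ℝ) (c : ℝ) (b : ℝ → ℝ) : Prop :=
  (∀ t ≤ -c, b t = 1) ∧ ∀ t, -c ≤ t → t ≤ 0 → b t = 1 - doublePrimitive M c t

section Update

variable {M M' b b' : ℝ → ℝ} {c c' : ℝ}

theorem continuousOn_of_update (hc : 0 ≤ c) (hM : IntervalIntegrable M volume (-c) 0)
    (hb : IsUpdate M c b) :
    ContinuousOn b (Iic 0) := by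
  have h : ContinuousOn (fun t => 1 - doublePrimitive M c (max t (-c))) (Iic 0) :=
    continuousOn_const.sub ((continuousOn_doublePrimitive hM hc).comp
      (continuous_id.max continuous_const).continuousOn
      fun t ht => ⟨le_max_right _ _, max_le ht (by linarith)⟩)
  refine h.congr fun t ht => ?_
  rcases le_total t (-c) with h | h
  · simp [hb.1 t h, max_eq_right h, doublePrimitive]
  · simp [hb.2 t h ht, max_eq_left h]

theorem cosProfile_le_of_update (hM : ∀ a ≤ 0, IntervalIntegrable M volume a 0)
    (hMp : ∀ w ≤ 0, cosProfile w ≤ M w) (hD : doublePrimitive M c 0 = 1)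
    (hb : IsUpdate M c b) :
    ∀ t ≤ 0, cosProfile t ≤ b t := by
  have hsin : ∀ w ≤ 0, -sin w ≤ M w := fun w hw => (neg_sin_le_cosProfile w).trans (hMp w hw)
  have hcπ : c ≤ π / 2 := le_pi_div_two_of_doublePrimitive_eq_one hM (fun w hw => hsin w hw.2)
    (fun w hw => (cosProfile_pos hw).trans_le (hMp w hw.le)) hD
  intro t ht
  rcases le_total t (-c) with h | h
  · exact (hb.1 t h).symm ▸ cosProfile_le_one t
  · rw [hb.2 t h ht, cosProfile_of_le (by linarith)]
    exact neg_sin_le_one_sub_doublePrimitive (hM _ (by linarith)) (fun w hw => hsin w hw.2)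
      hD.le t ⟨h, ht⟩

theorem le_of_doublePrimitive_le (hM : IntervalIntegrable M volume (-c) 0)
    (hM' : IntervalIntegrable M' volume (-c) 0) (hM'M : ∀ w ∈ Icc (-c) 0, M' w ≤ M w)
    (hpos : ∀ w < 0, 0 < M' w) (hc' : 0 < c')
    (hD : doublePrimitive M c 0 ≤ doublePrimitive M' c' 0) : c ≤ c' := by
  by_contra! hlt
  have hstrict := doublePrimitive_lt_of_lt hM' (fun w hw => (hpos w (by linarith [hw.2])).le)
    (fun w hw => hpos w (by linarith [hw.2])) hc' hlt
  have hmono := doublePrimitive_mono hM' hM (by linarith) hM'M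
  linarith

theorem update_le_update (hM : IntervalIntegrable M volume (-c) 0)
    (hM' : ∀ a ≤ 0, IntervalIntegrable M' volume a 0) (hM'M : ∀ w ≤ 0, M' w ≤ M w)
    (hpos : ∀ w < 0, 0 < M' w) (hc : 0 < c) (hc' : 0 < c')
    (hD : doublePrimitive M c 0 = doublePrimitive M' c' 0)
    (hb : IsUpdate M c b)
    (hb' : IsUpdate M' c' b') :
    c ≤ c' ∧ ∀ t ≤ 0, b' t ≤ b t := by
  have hM'0 : ∀ w < 0, 0 ≤ M' w := fun w hw => (hpos w hw).le
  have hcc' : c ≤ c' := le_of_doublePrimitive_le hM (hM' _ (by linarith))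
    (fun w hw => hM'M w hw.2) hpos hc' hD.le
  refine ⟨hcc', fun t ht => ?_⟩
  rcases le_total t (-c') with h' | h'
  · rw [hb'.1 t h', hb.1 t (by linarith)]
  rcases le_total t (-c) with h | h
  · rw [hb'.2 t h' ht, hb.1 t h]
    linarith [doublePrimitive_nonneg h' fun w hw => hM'0 w (by linarith [hw.2])]
  · rw [hb'.2 t h' ht, hb.2 t h ht]
    linarith [doublePrimitive_le_doublePrimitive hM (hM' _ (by linarith))
      (fun w hw => hM'M w hw.2) (fun w hw => hM'0 w (by linarith [hw.2])) hcc' hD.le t ⟨h, ht⟩]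

end Update

theorem intervalIntegrable_max_of_continuousOn {g b : ℝ → ℝ} (hg : LocallyIntegrable g)
    (hb : ContinuousOn b (Iic 0)) {a : ℝ} (ha : a ≤ 0) :
    IntervalIntegrable (fun w => max (b w) (g w)) volume a 0 :=
  (hb.mono (by rw [uIcc_of_le ha]; exact Icc_subset_Iic_self)).intervalIntegrable.max
    (hg.integrableOn_isCompact isCompact_uIcc).intervalIntegrable

namespace IsBetaSeq

variable {g : ℝ → ℝ} {β : ℕ → ℝ → ℝ} {ϖ : ℕ → ℝ}

theorem continuousOn_and_cosProfile_le (hβ : IsBetaSeq g β ϖ) (hg : LocallyIntegrable g)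
    (n : ℕ) :
    ContinuousOn (β n) (Iic 0) ∧ ∀ t ≤ 0, cosProfile t ≤ β n t := by
  induction n with
  | zero =>
    exact ⟨continuousOn_const.congr fun t ht => hβ.1 t ht,
      fun t ht => (hβ.1 t ht).symm ▸ cosProfile_le_one t⟩
  | succ n ih =>
    obtain ⟨⟨hϖ, hD⟩, hb⟩ := hβ.2 n
    have hM := fun a (ha : a ≤ 0) => intervalIntegrable_max_of_continuousOn hg ih.1 ha
    exact ⟨continuousOn_of_update hϖ.le (hM _ (by linarith)) hb,
      cosProfile_le_of_update hM (fun w hw => (ih.2 w hw).trans (le_max_left _ _)) hD hb⟩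

theorem intervalIntegrable_max (hβ : IsBetaSeq g β ϖ) (hg : LocallyIntegrable g) (n : ℕ)
    {a : ℝ} (ha : a ≤ 0) : IntervalIntegrable (fun w => max (β n w) (g w)) volume a 0 :=
  intervalIntegrable_max_of_continuousOn hg (continuousOn_and_cosProfile_le hβ hg n).1 ha

theorem cosProfile_le_max (hβ : IsBetaSeq g β ϖ) (hg : LocallyIntegrable g) (n : ℕ) {w : ℝ}
    (hw : w ≤ 0) : cosProfile w ≤ max (β n w) (g w) :=
  ((continuousOn_and_cosProfile_le hβ hg n).2 w hw).trans (le_max_left _ _)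

theorem varpi_le_pi_div_two (hβ : IsBetaSeq g β ϖ) (hg : LocallyIntegrable g) (n : ℕ) :
    ϖ n ≤ π / 2 :=
  le_pi_div_two_of_doublePrimitive_eq_one (fun _ => intervalIntegrable_max hβ hg n)
    (fun w hw => (neg_sin_le_cosProfile w).trans (cosProfile_le_max hβ hg n hw.2))
    (fun _ hw => (cosProfile_pos hw).trans_le (cosProfile_le_max hβ hg n hw.le)) (hβ.2 n).1.2

theorem varpi_le_and_beta_le_of_beta_le (hβ : IsBetaSeq g β ϖ) (hg : LocallyIntegrable g)
    {n : ℕ} (h : ∀ t ≤ 0, β (n + 1) t ≤ β n t) :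
    ϖ n ≤ ϖ (n + 1) ∧ ∀ t ≤ 0, β (n + 2) t ≤ β (n + 1) t := by
  obtain ⟨⟨hϖ, hD⟩, hb⟩ := hβ.2 n
  obtain ⟨⟨hϖ', hD'⟩, hb'⟩ := hβ.2 (n + 1)
  exact update_le_update (intervalIntegrable_max hβ hg n (by linarith))
    (fun _ => intervalIntegrable_max hβ hg (n + 1)) (fun w hw => max_le_max (h w hw) le_rfl)
    (fun w hw => (cosProfile_pos hw).trans_le (cosProfile_le_max hβ hg (n + 1) hw.le))
    hϖ hϖ' (hD.trans hD'.symm) hb hb'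

theorem beta_succ_le (hβ : IsBetaSeq g β ϖ) (hg : LocallyIntegrable g) (n : ℕ) :
    ∀ t ≤ 0, β (n + 1) t ≤ β n t := by
  induction n with
  | zero =>
    intro t ht
    obtain ⟨⟨hϖ, -⟩, hb₁, hb₂⟩ := hβ.2 0
    rw [hβ.1 t ht]
    rcases le_total t (-ϖ 0) with h | h
    · exact (hb₁ t h).le
    · rw [hb₂ t h ht, sub_le_self_iff]
      exact doublePrimitive_nonneg h fun w hw =>
        (hβ.1 w (hw.2.trans ht)).symm ▸ zero_le_one.trans (le_max_left _ _)
  | succ n ih => exact (varpi_le_and_beta_le_of_beta_le hβ hg ih).2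

theorem monotone_varpi (hβ : IsBetaSeq g β ϖ) (hg : LocallyIntegrable g) : Monotone ϖ :=
  monotone_nat_of_le_succ fun n =>
    (varpi_le_and_beta_le_of_beta_le hβ hg (beta_succ_le hβ hg n)).1

end IsBetaSeq

theorem IsDelayCosine.continuous_s11 {Δ : ℝ} {r : ℝ → ℝ} (hr : IsDelayCosine Δ r) :
    Continuous r := by
  refine continuous_iff_continuousAt.2 fun x => ?_
  rcases le_or_gt 0 x with hx | hx
  · exact (hr.2.1 x hx).continuousAt
  · exact continuousAt_const.congr <| (eventually_lt_nhds hx).mono fun y hy => (hr.1 y hy.le).symm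

theorem locallyIntegrable_gAux (ρ Δ θ : ℝ) {r : ℝ → ℝ} (hr : Continuous r) :
    LocallyIntegrable (gAux ρ Δ θ r) :=
  (continuous_const.mul (hr.comp (by fun_prop))).locallyIntegrable.indicator measurableSet_Icc

theorem varpi_bounded_by_pi_div_two_general
    (Δ ρ : ℝ)
    (r : ℝ → ℝ) (θ : ℝ) (hr : IsDelayCosine Δ r)
    (β : ℕ → ℝ → ℝ) (ϖ : ℕ → ℝ) (hβ : IsBetaSeq (gAux ρ Δ θ r) β ϖ) :
    (∀ n : ℕ, ∀ t ∈ Set.Icc (-(Real.pi / 2)) (0:ℝ), Real.cos (t + Real.pi / 2) ≤ β n t) ∧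
    (∀ n : ℕ, ϖ n ≤ Real.pi / 2) ∧
    ∃ Ψ : ℝ, Filter.Tendsto ϖ Filter.atTop (nhds Ψ) ∧ Ψ ≤ Real.pi / 2 := by
  have hg := locallyIntegrable_gAux ρ Δ θ hr.continuous_s11
  have hϖ := hβ.varpi_le_pi_div_two hg
  refine ⟨fun n t ht => ?_, hϖ, ⨆ n, ϖ n, ?_, ciSup_le hϖ⟩
  · rw [cos_add_pi_div_two]
    exact (neg_sin_le_cosProfile t).trans ((hβ.continuousOn_and_cosProfile_le hg n).2 t ht.2)
  · exact tendsto_atTop_ciSup (hβ.monotone_varpi hg) ⟨π / 2, forall_mem_range.2 hϖ⟩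

/-- `β_n ≥ cos(· + π/2)` on `[-π/2, 0]`, hence `ϖ_n ≤ π/2` and
`Ψ(ρ,Δ) = lim ϖ_n ≤ π/2`. -/
theorem varpi_bounded_by_pi_div_two
    (Δ ρ : ℝ) (hΔ : 0 ≤ Δ) (hρ : 0 < ρ)
    (r : ℝ → ℝ) (θ : ℝ) (hr : IsDelayCosine Δ r) (hθ : IsFirstZero r θ)
    (β : ℕ → ℝ → ℝ) (ϖ : ℕ → ℝ) (hβ : IsBetaSeq (gAux ρ Δ θ r) β ϖ) :
    (∀ n : ℕ, ∀ t ∈ Set.Icc (-(Real.pi / 2)) (0:ℝ), Real.cos (t + Real.pi / 2) ≤ β n t) ∧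
    (∀ n : ℕ, ϖ n ≤ Real.pi / 2) ∧
    ∃ Ψ : ℝ, Filter.Tendsto ϖ Filter.atTop (nhds Ψ) ∧ Ψ ≤ Real.pi / 2 :=
  varpi_bounded_by_pi_div_two_general Δ ρ r θ hr β ϖ hβ
end
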